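/- Assume 0 < θ < 1 and C⋆ > 0. For every unit vector q ∈ ℝ^p with ‖Aᵀq‖_∞² ≥ C⋆, writing ζ = Aᵀq, one has ‖ζ‖₄⁴·(1 − θ/(4(1−θ)C⋆²)) ≤ α(q) ≤ ‖ζ‖₄⁴. Consequently, if C⋆² > θ/(4(1−θ)) then α(q) > 0. -/

import Mathlib

open Matrix MeasureTheory ProbabilityTheory Real
open scoped BigOperators ENNReal

noncomputable section

/-- squared Euclidean norm -/
def l2sq {m : ℕ} (v : Fin m → ℝ) : ℝ := ∑ i, v i ^ 2

/-- fourth power of the ℓ₄ norm -/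
def l4p4 {m : ℕ} (v : Fin m → ℝ) : ℝ := ∑ i, v i ^ 4

/-- Euclidean norm -/
def l2norm {m : ℕ} (v : Fin m → ℝ) : ℝ := Real.sqrt (l2sq v)

/-- squared sup-norm -/
def linfSq {m : ℕ} (v : Fin m → ℝ) : ℝ := ⨆ i, (v i) ^ 2

/-- projection onto the orthogonal complement of q -/
def proj {p : ℕ} (q : Fin p → ℝ) : Matrix (Fin p) (Fin p) ℝ := 1 - Matrix.vecMulVec q q

def zeta {p r : ℕ} (A : Matrix (Fin p) (Fin r) ℝ) (q : Fin p → ℝ) : Fin r → ℝ := Aᵀ *ᵥ q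

/-- population objective -/
def fpop {p r : ℕ} (θ : ℝ) (A : Matrix (Fin p) (Fin r) ℝ) (q : Fin p → ℝ) : ℝ :=
  -(1/4) * ((1 - θ) * l4p4 (zeta A q) + θ * (l2sq (zeta A q)) ^ 2)

/-- Riemannian gradient of the population objective -/
def gradf {p r : ℕ} (θ : ℝ) (A : Matrix (Fin p) (Fin r) ℝ) (q : Fin p → ℝ) : Fin p → ℝ :=
  -((proj q) *ᵥ ((1 - θ) • (A *ᵥ fun j => (zeta A q j) ^ 3)
      + (θ * l2sq (zeta A q)) • (A *ᵥ zeta A q)))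

/-- Riemannian Hessian of the population objective -/
def hessf {p r : ℕ} (θ : ℝ) (A : Matrix (Fin p) (Fin r) ℝ) (q : Fin p → ℝ) :
    Matrix (Fin p) (Fin p) ℝ :=
  -((1 - θ) • (proj q *
      ((3 : ℝ) • (A * Matrix.diagonal (fun j => (zeta A q j) ^ 2) * Aᵀ)
        - l4p4 (zeta A q) • (1 : Matrix (Fin p) (Fin p) ℝ)) * proj q))
  - θ • (proj q *
      (l2sq (zeta A q) • (A * Aᵀ)
        + (2 : ℝ) • (A * Aᵀ * Matrix.vecMulVec q q * (A * Aᵀ))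
        - (l2sq (zeta A q)) ^ 2 • (1 : Matrix (Fin p) (Fin p) ℝ)) * proj q)

/-- quadratic form -/
def qform {p : ℕ} (M : Matrix (Fin p) (Fin p) ℝ) (v : Fin p → ℝ) : ℝ := v ⬝ᵥ (M *ᵥ v)

/-- α(q) -/
def alphaf {p r : ℕ} (θ : ℝ) (A : Matrix (Fin p) (Fin r) ℝ) (q : Fin p → ℝ) : ℝ :=
  l4p4 (zeta A q) + (θ / (1 - θ)) * ((l2sq (zeta A q)) ^ 2 - l2sq (zeta A q))

/-- columns of X -/
def colX {r n : ℕ} (X : Matrix (Fin r) (Fin n) ℝ) (k : Fin n) : Fin r → ℝ := fun i => X i k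

/-- finite-sample objective -/
def Ffun {p r n : ℕ} (θ σ : ℝ) (A : Matrix (Fin p) (Fin r) ℝ) (X : Matrix (Fin r) (Fin n) ℝ)
    (q : Fin p → ℝ) : ℝ :=
  -(1 / (12 * θ * σ ^ 4 * n)) * ∑ k : Fin n, (q ⬝ᵥ (A *ᵥ colX X k)) ^ 4

/-- Riemannian gradient of the finite-sample objective -/
def gradF {p r n : ℕ} (θ σ : ℝ) (A : Matrix (Fin p) (Fin r) ℝ) (X : Matrix (Fin r) (Fin n) ℝ)
    (q : Fin p → ℝ) : Fin p → ℝ :=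
  (-(1 / (3 * θ * σ ^ 4 * n))) •
    ((proj q) *ᵥ ∑ k : Fin n, ((q ⬝ᵥ (A *ᵥ colX X k)) ^ 3) • (A *ᵥ colX X k))

/-- Riemannian Hessian of the finite-sample objective -/
def hessF {p r n : ℕ} (θ σ : ℝ) (A : Matrix (Fin p) (Fin r) ℝ) (X : Matrix (Fin r) (Fin n) ℝ)
    (q : Fin p → ℝ) : Matrix (Fin p) (Fin p) ℝ :=
  (-(1 / (3 * θ * σ ^ 4 * n))) •
    ∑ k : Fin n, proj q *
      ((3 * (q ⬝ᵥ (A *ᵥ colX X k)) ^ 2) • Matrix.vecMulVec (A *ᵥ colX X k) (A *ᵥ colX X k)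
        - ((q ⬝ᵥ (A *ᵥ colX X k)) ^ 4) • (1 : Matrix (Fin p) (Fin p) ℝ)) * proj q

/-- spectral norm of a rectangular matrix -/
def opNorm {m n : ℕ} (M : Matrix (Fin m) (Fin n) ℝ) : ℝ :=
  ‖LinearMap.toContinuousLinearMap (Matrix.toEuclideanLin M)‖

/-- Bernoulli(θ) law on ℝ -/
def bernoulliReal (θ : ℝ) : Measure ℝ :=
  ENNReal.ofReal θ • Measure.dirac (1 : ℝ) + ENNReal.ofReal (1 - θ) • Measure.dirac (0 : ℝ)

/-- Bernoulli–Gaussian law BG(θ, σ²) on ℝ -/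
def bgLaw (θ σ2 : ℝ) : Measure ℝ :=
  ((bernoulliReal θ).prod (gaussianReal 0 σ2.toNNReal)).map fun p => p.1 * p.2

/-- law of a random vector in ℝ^r with i.i.d. BG(θ, σ²) entries -/
def bgVec (r : ℕ) (θ σ2 : ℝ) : Measure (Fin r → ℝ) :=
  Measure.pi fun _ : Fin r => bgLaw θ σ2

/-- law of a random r×n matrix with i.i.d. BG(θ, σ²) entries -/
def bgMatrix (r n : ℕ) (θ σ2 : ℝ) : Measure (Fin r → Fin n → ℝ) :=
  Measure.pi fun _ : Fin r => Measure.pi fun _ : Fin n => bgLaw θ σ2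


/-!
Since the columns of `A` are orthonormal, Bessel's inequality gives `‖ζ‖₂² ≤ ‖q‖₂² = 1`, so the
penalty `‖ζ‖₂² - ‖ζ‖₂⁴` lies in `[0, 1/4]`. The upper bound follows, and the lower bound because
`‖ζ‖₄⁴ ≥ ‖ζ‖_∞⁴ ≥ C⋆²` turns the additive loss `θ/(4(1-θ))` into the relative one
`θ/(4(1-θ)C⋆²)`.
-/

lemma l2sq_nonneg {m : ℕ} (v : Fin m → ℝ) : 0 ≤ l2sq v :=
  Finset.sum_nonneg fun i _ => sq_nonneg (v i)

lemma l2sq_eq_dotProduct {m : ℕ} (v : Fin m → ℝ) : l2sq v = v ⬝ᵥ v := by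
  simp only [l2sq, dotProduct, sq]

lemma l2sq_zeta_le {p r : ℕ} {A : Matrix (Fin p) (Fin r) ℝ} (hA : Aᵀ * A = 1)
    (q : Fin p → ℝ) : l2sq (zeta A q) ≤ l2sq q := by
  have hAA : (A *ᵥ zeta A q) ⬝ᵥ (A *ᵥ zeta A q) = zeta A q ⬝ᵥ zeta A q := by
    rw [dotProduct_mulVec, ← mulVec_transpose, mulVec_mulVec, hA, one_mulVec]
  have hqA : q ⬝ᵥ (A *ᵥ zeta A q) = zeta A q ⬝ᵥ zeta A q := by
    rw [dotProduct_mulVec, ← mulVec_transpose]; rfl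
  have hres : l2sq (q - A *ᵥ zeta A q) = l2sq q - l2sq (zeta A q) := by
    simp only [l2sq_eq_dotProduct, sub_dotProduct, dotProduct_sub, hAA, hqA,
      dotProduct_comm (A *ᵥ zeta A q) q]
    ring
  linarith [hres ▸ l2sq_nonneg (q - A *ᵥ zeta A q)]

lemma sq_linfSq_le_l4p4 {m : ℕ} (v : Fin m → ℝ) : linfSq v ^ 2 ≤ l4p4 v := by
  cases isEmpty_or_nonempty (Fin m) with
  | inl _ => simp [linfSq, l4p4]
  | inr _ =>
    obtain ⟨j, hj⟩ := exists_eq_ciSup_of_finite (f := fun i => v i ^ 2)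
    calc linfSq v ^ 2 = v j ^ 4 := by rw [linfSq, ← hj]; ring
      _ ≤ l4p4 v := Finset.single_le_sum (f := fun i => v i ^ 4)
          (fun i _ => by positivity) (Finset.mem_univ j)

lemma sub_sq_le_quarter (s : ℝ) : s - s ^ 2 ≤ 1 / 4 := by
  nlinarith [sq_nonneg (2 * s - 1)]

theorem stmt5_general (p r : ℕ)
    (A : Matrix (Fin p) (Fin r) ℝ) (hA : Aᵀ * A = 1)
    (θ Cstar : ℝ) (hθ0 : 0 < θ) (hθ : θ < 1) (hC : 0 < Cstar)
    (q : Fin p → ℝ) (hq : l2sq q = 1) (hinf : Cstar ≤ linfSq (zeta A q)) :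
    l4p4 (zeta A q) * (1 - θ/(4*(1-θ)*Cstar^2)) ≤ alphaf θ A q ∧
    alphaf θ A q ≤ l4p4 (zeta A q) ∧
    (θ/(4*(1-θ)) < Cstar^2 → 0 < alphaf θ A q) := by
  set s := l2sq (zeta A q)
  set L := l4p4 (zeta A q)
  have hα : alphaf θ A q = L - θ / (1 - θ) * (s - s ^ 2) := by rw [alphaf]; ring
  have hc : 0 ≤ θ / (1 - θ) := div_nonneg hθ0.le (sub_pos.2 hθ).le
  have hs1 : s ≤ 1 := hq ▸ l2sq_zeta_le hA q
  have hC2 : 0 < Cstar ^ 2 := by positivity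
  have hLC : Cstar ^ 2 ≤ L := (pow_le_pow_left₀ hC.le hinf 2).trans (sq_linfSq_le_l4p4 _)
  have hlow : L * (1 - θ / (4 * (1 - θ) * Cstar ^ 2)) ≤ alphaf θ A q := calc
    L * (1 - θ / (4 * (1 - θ) * Cstar ^ 2)) = L - θ / (1 - θ) / 4 * (L / Cstar ^ 2) := by
      field_simp
    _ ≤ L - θ / (1 - θ) * (1 / 4) := by
      rw [mul_one_div]
      exact sub_le_sub_left (le_mul_of_one_le_right (by positivity) ((one_le_div hC2).2 hLC)) L
    _ ≤ alphaf θ A q := by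
      rw [hα]; gcongr; exact sub_sq_le_quarter s
  refine ⟨hlow, ?_, fun hθC => hlow.trans_lt' ?_⟩
  · rw [hα]
    exact sub_le_self L (mul_nonneg hc (by nlinarith [l2sq_nonneg (zeta A q)]))
  · have hloss : θ / (4 * (1 - θ) * Cstar ^ 2) < 1 := by
      rwa [← div_div, div_lt_one hC2]
    exact mul_pos (hC2.trans_le hLC) (by linarith)

theorem stmt5 (p r : ℕ) (hr : 1 ≤ r) (hrp : r ≤ p)
    (A : Matrix (Fin p) (Fin r) ℝ) (hA : Aᵀ * A = 1)
    (θ Cstar : ℝ) (hθ0 : 0 < θ) (hθ : θ < 1) (hC : 0 < Cstar)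
    (q : Fin p → ℝ) (hq : l2sq q = 1) (hinf : Cstar ≤ linfSq (zeta A q)) :
    l4p4 (zeta A q) * (1 - θ/(4*(1-θ)*Cstar^2)) ≤ alphaf θ A q ∧
    alphaf θ A q ≤ l4p4 (zeta A q) ∧
    (θ/(4*(1-θ)) < Cstar^2 → 0 < alphaf θ A q) :=
  stmt5_general p r A hA θ Cstar hθ0 hθ hC q hq hinf

end
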